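/- Let G be an outerplanar graph of order n ≥ 9, and let u be a vertex of G with 1 ≤ d(u) ≤ n − 4. Then η(u) ≤ n, where η(u) = d(u) + (1/d(u))·Σ_{v ∈ N(u)} d(v). -/

import Mathlib

open scoped Classical

namespace OuterplanarQ

/-- Signless Laplacian matrix Q(G) = D(G) + A(G). -/
noncomputable def qMatrix {V : Type*} [Fintype V] (G : SimpleGraph V) : Matrix V V ℝ :=
  fun i j => (if i = j then (G.degree i : ℝ) else 0) + (if G.Adj i j then 1 else 0)

/-- The Q-index: the largest eigenvalue of Q(G). -/
noncomputable def qIndex {V : Type*} [Fintype V] (G : SimpleGraph V) : ℝ :=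
  sSup {μ : ℝ | ∃ x : V → ℝ, x ≠ 0 ∧ (qMatrix G).mulVec x = μ • x}

/-- Outerplanar: one-page book embedding characterization, i.e. the vertices admit a
linear ordering (injection into ℝ) such that no two edges interleave. -/
def IsOuterplanar {V : Type*} (G : SimpleGraph V) : Prop :=
  ∃ f : V → ℝ, Function.Injective f ∧
    ∀ a b c d : V, G.Adj a b → G.Adj c d →
      ¬ (f a < f c ∧ f c < f b ∧ f b < f d)

/-- `G` contains a copy of `F` as a subgraph. -/
def ContainsCopy {α β : Type*} (G : SimpleGraph α) (F : SimpleGraph β) : Prop :=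
  ∃ f : β → α, Function.Injective f ∧ ∀ a b : β, F.Adj a b → G.Adj (f a) (f b)

/-- Disjoint union of `t` copies of the path on `k` vertices. -/
def pathUnion (t k : ℕ) : SimpleGraph (Fin t × Fin k) where
  Adj a b := a.1 = b.1 ∧ (SimpleGraph.pathGraph k).Adj a.2 b.2
  symm := ⟨fun _ _ h => ⟨h.1.symm, h.2.symm⟩⟩
  loopless := ⟨fun a h => h.2.ne rfl⟩

/-- Disjoint union of two graphs. -/
def disjSum {α β : Type*} (G : SimpleGraph α) (H : SimpleGraph β) : SimpleGraph (α ⊕ β) where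
  Adj a b := match a, b with
    | Sum.inl x, Sum.inl y => G.Adj x y
    | Sum.inr x, Sum.inr y => H.Adj x y
    | _, _ => False
  symm := ⟨by rintro (x|x) (y|y) h <;> simp_all <;> exact h.symm⟩
  loopless := ⟨by rintro (x|x) h <;> simp_all⟩

/-- The join `K₁ ∨ H` of a single vertex with `H`. -/
def cone {V : Type*} (H : SimpleGraph V) : SimpleGraph (Option V) where
  Adj a b := match a, b with
    | none, none => False
    | none, some _ => True
    | some _, none => True
    | some x, some y => H.Adj x y
  symm := ⟨by rintro (_|x) (_|y) h <;> simp_all <;> exact h.symm⟩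
  loopless := ⟨by rintro (_|x) h <;> simp_all⟩

/-- A disjoint union of paths: acyclic with maximum degree at most 2. -/
def IsLinearForest {V : Type*} [Fintype V] (G : SimpleGraph V) : Prop :=
  G.IsAcyclic ∧ ∀ v : V, G.degree v ≤ 2

/-- The closed neighbourhood `N[u]`. -/
def closedNbhd {V : Type*} (G : SimpleGraph V) (u : V) : Set V :=
  insert u (G.neighborSet u)

/-- The graph obtained from `G` by adding the edge `uv`. -/
def addEdge {V : Type*} (G : SimpleGraph V) (u v : V) : SimpleGraph V :=
  G ⊔ SimpleGraph.fromEdgeSet {s(u, v)}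

/-- The graph obtained from `G` by deleting the edge `uv`. -/
def delEdge {V : Type*} (G : SimpleGraph V) (u v : V) : SimpleGraph V :=
  G.deleteEdges {s(u, v)}

/-- η(u) = d(u) + (1/d(u)) · Σ_{v ∈ N(u)} d(v). -/
noncomputable def eta {V : Type*} [Fintype V] (G : SimpleGraph V) (u : V) : ℝ :=
  (G.degree u : ℝ) + (1 / (G.degree u : ℝ)) * ∑ v ∈ G.neighborFinset u, (G.degree v : ℝ)

/-! With `d = d(u)` the claim is `∑_{v ∈ N(u)} d(v) + d² ≤ d n`. Rotating the spine of a book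
embedding so that a chosen vertex comes first shows that an outerplanar graph is `K_{2,3}`-free
and that a neighbourhood `N(u)` spans at most `d - 1` edges. Counting the edges at `N(u)` from
their other endpoints then gives `∑_{v ∈ N(u)} d(v) ≤ d + 2n - 4`, enough when `d ≥ 3`; for
`d = 2`, `K_{2,3}`-freeness gives `d(v) + d(w) ≤ n + 2`, and for `d = 1`, `d(v) < n`. -/

open Finset

section

variable {V : Type*}

def IsBookEmbedding (G : SimpleGraph V) (f : V → ℝ) : Prop :=
  Function.Injective f ∧
    ∀ a b c d : V, G.Adj a b → G.Adj c d → ¬ (f a < f c ∧ f c < f b ∧ f b < f d)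

variable {G : SimpleGraph V}

/-- Cutting the spine just before `u` and moving the part to the left of `u` to the far right
keeps the edges pairwise non-interleaving, since interleaving is invariant under cyclic
rotation of the order. -/
theorem IsBookEmbedding.exists_min [Finite V] {f : V → ℝ} (hf : IsBookEmbedding G f) (u : V) :
    ∃ g, IsBookEmbedding G g ∧ ∀ x, x ≠ u → g u < g x := by
  obtain ⟨M, hM⟩ := (Set.finite_range f).bddAbove
  obtain ⟨m, hm⟩ := (Set.finite_range f).bddBelow
  have hb : ∀ x, m ≤ f x ∧ f x ≤ M := fun x => ⟨hm ⟨x, rfl⟩, hM ⟨x, rfl⟩⟩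
  refine ⟨fun x => if f x < f u then f x + (M - m + 1) else f x, ⟨?_, ?_⟩, ?_⟩
  · intro x y hxy
    apply hf.1
    have := hb x; have := hb y
    dsimp only at hxy
    split_ifs at hxy <;> linarith
  · rintro a b c d hab hcd ⟨h₁, h₂, h₃⟩
    have := hb a; have := hb b; have := hb c; have := hb d
    dsimp only at h₁ h₂ h₃
    split_ifs at h₁ h₂ h₃ <;>
      first
      | linarith
      | exact hf.2 a b c d hab hcd ⟨by linarith, by linarith, by linarith⟩
      | exact hf.2 c d b a hcd hab.symm ⟨by linarith, by linarith, by linarith⟩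
      | exact hf.2 b a d c hab.symm hcd.symm ⟨by linarith, by linarith, by linarith⟩
      | exact hf.2 d c a b hcd.symm hab ⟨by linarith, by linarith, by linarith⟩
  · intro x hx
    have := hb x; have := hb u
    have hne : f x ≠ f u := hf.1.ne hx
    simp only [lt_irrefl, if_false]
    split_ifs <;> first | linarith | exact lt_of_le_of_ne (not_lt.1 ‹_›) hne.symm

theorem IsOuterplanar.exists_bookEmbedding_min [Finite V] (hG : IsOuterplanar G) (u : V) :
    ∃ g, IsBookEmbedding G g ∧ ∀ x, x ≠ u → g u < g x :=
  let ⟨_, hf⟩ := hG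
  IsBookEmbedding.exists_min hf u

theorem card_le_one_of_forall_not_lt {s : Finset V} {g : V → ℝ}
    (hg : Function.Injective g) (h : ∀ a ∈ s, ∀ b ∈ s, ¬ g a < g b) : #s ≤ 1 :=
  Finset.card_le_one.2 fun a ha b hb =>
    hg (le_antisymm (not_lt.1 (h b hb a ha)) (not_lt.1 (h a ha b hb)))

section Finite

variable [Fintype V]

theorem IsOuterplanar.card_neighborFinset_inter_le_two (hG : IsOuterplanar G) {p q : V}
    (hpq : p ≠ q) : #(G.neighborFinset p ∩ G.neighborFinset q) ≤ 2 := by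
  obtain ⟨g, ⟨hg, hcross⟩, hmin⟩ := hG.exists_bookEmbedding_min p
  set C := G.neighborFinset p ∩ G.neighborFinset q
  have hC : ∀ z ∈ C, G.Adj p z ∧ G.Adj z q := fun z hz => by
    simp only [C, mem_inter, SimpleGraph.mem_neighborFinset] at hz
    exact ⟨hz.1, hz.2.symm⟩
  have hsplit : C ⊆ C.filter (g · < g q) ∪ C.filter (g q < g ·) := fun z hz => by
    rcases lt_or_gt_of_ne (hg.ne (hC z hz).2.ne) with h | h <;> simp [hz, h]
  have hbelow : #(C.filter (g · < g q)) ≤ 1 :=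
    card_le_one_of_forall_not_lt hg fun a ha b hb hab => by
      rw [mem_filter] at ha hb
      exact hcross p b a q (hC b hb.1).1 (hC a ha.1).2
        ⟨hmin a (hC a ha.1).1.ne', hab, hb.2⟩
  have habove : #(C.filter (g q < g ·)) ≤ 1 :=
    card_le_one_of_forall_not_lt hg fun a ha b hb hab => by
      rw [mem_filter] at ha hb
      exact hcross p a q b (hC a ha.1).1 (hC b hb.1).2.symm ⟨hmin q hpq.symm, ha.2, hab⟩
  calc #C ≤ _ := card_le_card hsplit
    _ ≤ _ := card_union_le _ _
    _ ≤ 2 := by omega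

theorem IsOuterplanar.degree_add_degree_le (hG : IsOuterplanar G) {p q : V} (hpq : p ≠ q) :
    G.degree p + G.degree q ≤ Fintype.card V + 2 := by
  rw [← G.card_neighborFinset_eq_degree, ← G.card_neighborFinset_eq_degree,
    ← card_union_add_card_inter]
  have := hG.card_neighborFinset_inter_le_two hpq
  have := card_le_univ (G.neighborFinset p ∪ G.neighborFinset q)
  omega

/-- With `u` first on the spine, the first and the last neighbour of `u` have at most one
neighbour in `N(u)` each, and every other one at most two (`K_{2,3}`-freeness with `u`). -/
theorem IsOuterplanar.sum_card_neighborFinset_inter_add_two_le (hG : IsOuterplanar G) {u : V}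
    (hu : 2 ≤ G.degree u) :
    ∑ v ∈ G.neighborFinset u, #(G.neighborFinset u ∩ G.neighborFinset v) + 2
      ≤ 2 * G.degree u := by
  obtain ⟨g, ⟨hg, hcross⟩, hmin⟩ := hG.exists_bookEmbedding_min u
  set A := G.neighborFinset u
  have hA : #A = G.degree u := G.card_neighborFinset_eq_degree u
  have hadj : ∀ {v}, v ∈ A → G.Adj u v := (G.mem_neighborFinset u _).1
  have hnbr : ∀ {v w}, w ∈ A ∩ G.neighborFinset v → G.Adj u w ∧ G.Adj v w := fun hw => by
    rw [mem_inter] at hw; exact ⟨hadj hw.1, (G.mem_neighborFinset _ _).1 hw.2⟩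
  obtain ⟨m, hmA, hm⟩ := A.exists_min_image g (card_pos.1 (by omega))
  obtain ⟨M, hMA, hM⟩ := A.exists_max_image g (card_pos.1 (by omega))
  have hmM : m ≠ M := by
    rintro rfl
    have : #A ≤ 1 := card_le_one_of_forall_not_lt hg fun a ha b hb hab =>
      (hab.trans_le (hM b hb)).not_ge (hm a ha)
    omega
  have hfirst : #(A ∩ G.neighborFinset m) ≤ 1 :=
    card_le_one_of_forall_not_lt hg fun a ha b hb hab => by
      have hma : g m < g a := (hm a (mem_inter.1 ha).1).lt_of_ne (hg.ne (hnbr ha).2.ne)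
      exact hcross u a m b (hnbr ha).1 (hnbr hb).2 ⟨hmin m (hadj hmA).ne', hma, hab⟩
  have hlast : #(A ∩ G.neighborFinset M) ≤ 1 :=
    card_le_one_of_forall_not_lt hg fun a ha b hb hab => by
      have hbM : g b < g M := (hM b (mem_inter.1 hb).1).lt_of_ne (hg.ne (hnbr hb).2.ne')
      exact hcross u b a M (hnbr hb).1 (hnbr ha).2.symm ⟨hmin a (hnbr ha).1.ne', hab, hbM⟩
  have hrest : ∑ v ∈ (A.erase m).erase M, #(A ∩ G.neighborFinset v)
      ≤ #((A.erase m).erase M) * 2 :=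
    sum_le_card_nsmul _ _ _ fun v hv =>
      hG.card_neighborFinset_inter_le_two (hadj (mem_of_mem_erase (mem_of_mem_erase hv))).ne
  rw [← add_sum_erase _ _ hmA, ← add_sum_erase _ _ (mem_erase.2 ⟨hmM.symm, hMA⟩)]
  rw [card_erase_of_mem (mem_erase.2 ⟨hmM.symm, hMA⟩), card_erase_of_mem hmA] at hrest
  omega

theorem sum_degree_eq_sum_card_inter_neighborFinset (A : Finset V) :
    ∑ v ∈ A, G.degree v = ∑ x, #(A ∩ G.neighborFinset x) := by
  convert sum_card_bipartiteAbove_eq_sum_card_bipartiteBelow (s := A) (t := univ) (r := G.Adj)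
    using 2 with v _ x _
  · rw [← G.card_neighborFinset_eq_degree, G.neighborFinset_eq_filter]; rfl
  · congr 1; ext w; simp [bipartiteBelow, G.adj_comm w x]

/-- Counting the edges leaving `N(u)` from their other end: `u` receives `d(u)` of them, `N(u)`
receives at most `2d(u) - 2`, and each of the other `n - d(u) - 1` vertices at most two. -/
theorem IsOuterplanar.sum_degree_neighborFinset_add_four_le (hG : IsOuterplanar G) {u : V}
    (hu : 2 ≤ G.degree u) :
    ∑ v ∈ G.neighborFinset u, G.degree v + 4 ≤ G.degree u + 2 * Fintype.card V := by
  have hnear := hG.sum_card_neighborFinset_inter_add_two_le hu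
  set A := G.neighborFinset u
  have hA : #A = G.degree u := G.card_neighborFinset_eq_degree u
  have huA : u ∉ A := G.notMem_neighborFinset_self u
  have hfar : ∑ x ∈ (insert u A)ᶜ, #(A ∩ G.neighborFinset x) ≤ #(insert u A)ᶜ * 2 :=
    sum_le_card_nsmul _ _ _ fun x hx =>
      hG.card_neighborFinset_inter_le_two fun h => by simp [h] at hx
  have hcard := card_add_card_compl (insert u A)
  rw [sum_degree_eq_sum_card_inter_neighborFinset, ← sum_add_sum_compl (insert u A),
    sum_insert huA, inter_self]
  rw [card_insert_of_notMem huA] at hcard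
  omega

theorem eta_le_of_sum_degree_add_sq_le {u : V} {n : ℕ} (hu : 0 < G.degree u)
    (h : ∑ v ∈ G.neighborFinset u, G.degree v + G.degree u * G.degree u ≤ G.degree u * n) :
    eta G u ≤ n := by
  have hd : (0 : ℝ) < G.degree u := by exact_mod_cast hu
  have h' : ∑ v ∈ G.neighborFinset u, (G.degree v : ℝ) + G.degree u * G.degree u
      ≤ G.degree u * n := by exact_mod_cast h
  have : 1 / (G.degree u : ℝ) * ∑ v ∈ G.neighborFinset u, (G.degree v : ℝ) ≤ n - G.degree u := by
    rw [one_div, inv_mul_le_iff₀ hd]; linarith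
  rw [eta]; linarith

end Finite

end

/-- In an outerplanar graph of order `n ≥ 9`, every vertex `u` with `1 ≤ d(u) ≤ n - 4`
satisfies `η(u) ≤ n`. -/
theorem eta_le_of_outerplanar
    {V : Type*} [Fintype V] {n : ℕ} (hn : 9 ≤ n)
    (G : SimpleGraph V) (hcard : Fintype.card V = n) (hout : IsOuterplanar G)
    (u : V) (h₁ : 1 ≤ G.degree u) (h₂ : G.degree u ≤ n - 4) :
    eta G u ≤ (n : ℝ) := by
  subst hcard
  refine eta_le_of_sum_degree_add_sq_le h₁ ?_
  have hA := G.card_neighborFinset_eq_degree u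
  obtain hd | hd | hd : G.degree u = 1 ∨ G.degree u = 2 ∨ 3 ≤ G.degree u := by omega
  · obtain ⟨v, hv⟩ := card_eq_one.1 (hA.trans hd)
    rw [hv, sum_singleton, hd]
    have := G.degree_lt_card_verts v
    omega
  · obtain ⟨v, w, hvw, hvw'⟩ := card_eq_two.1 (hA.trans hd)
    rw [hvw', sum_pair hvw, hd]
    have := hout.degree_add_degree_le hvw
    omega
  · have hsum := hout.sum_degree_neighborFinset_add_four_le (by omega : 2 ≤ G.degree u)
    have hdn : G.degree u + 4 ≤ Fintype.card V := by omega
    -- `(d - 3) (n - d - 4) ≥ 0` together with `n ≥ 8`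
    nlinarith
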